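/- For each integer m ≥ 2, the curve γ_m : R → R² is a regular curve, i.e. γ_m'(θ) ≠ 0 for all θ ∈ R, where γ_m(θ) = ( ((m−1)² cos(m+1)θ + (m+1)² cos(m−1)θ)/(4m), ((m−1)² sin(m+1)θ − (m+1)² sin(m−1)θ)/(4m) ). -/

import Mathlib

/-- The limit curve γ_m of the type I exceptional catenoid. -/
noncomputable def gammaM (m : ℕ) (θ : ℝ) : ℝ × ℝ :=
  ((((m:ℝ) - 1)^2 * Real.cos (((m:ℝ) + 1)*θ) + ((m:ℝ) + 1)^2 * Real.cos (((m:ℝ) - 1)*θ)) / (4*m),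
   (((m:ℝ) - 1)^2 * Real.sin (((m:ℝ) + 1)*θ) - ((m:ℝ) + 1)^2 * Real.sin (((m:ℝ) - 1)*θ)) / (4*m))

/-!
With `a = m - 1` and `b = m + 1`, the curve is `(a² e^{ibθ} + b² e^{-iaθ}) / 4m` in complex
notation, so its velocity is `i a b (a e^{ibθ} - b e^{-iaθ}) / 4m`. For `m ≥ 2` the factor `a b`
is nonzero, and the two exponential terms have the different moduli `a ≠ b`, so they cannot cancel.
-/

open Real

/-- The real form of `|a e^{iu}| = |b e^{-iv}|` whenever `a e^{iu} = b e^{-iv}`. -/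
lemma sq_eq_sq_of_mul_sin_add_mul_sin_eq_zero {a b u v : ℝ}
    (hsin : a * sin u + b * sin v = 0) (hcos : a * cos u = b * cos v) : a ^ 2 = b ^ 2 := by
  linear_combination (a * sin u - b * sin v) * hsin + (a * cos u + b * cos v) * hcos
    - a ^ 2 * sin_sq_add_cos_sq u + b ^ 2 * sin_sq_add_cos_sq v

lemma hasDerivAt_gammaM (m : ℕ) (θ : ℝ) :
    HasDerivAt (gammaM m)
      ((((m:ℝ) - 1) * ((m:ℝ) + 1) / (4 * m)) •
        (-(((m:ℝ) - 1) * sin (((m:ℝ) + 1) * θ) + ((m:ℝ) + 1) * sin (((m:ℝ) - 1) * θ)),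
          ((m:ℝ) - 1) * cos (((m:ℝ) + 1) * θ) - ((m:ℝ) + 1) * cos (((m:ℝ) - 1) * θ))) θ := by
  have hlin (c : ℝ) : HasDerivAt (fun θ : ℝ => c * θ) c θ := by
    simpa using (hasDerivAt_id θ).const_mul c
  have hb := hlin ((m:ℝ) + 1)
  have ha := hlin ((m:ℝ) - 1)
  refine HasDerivAt.congr_deriv
    ((((hb.cos.const_mul (((m:ℝ) - 1) ^ 2)).add (ha.cos.const_mul (((m:ℝ) + 1) ^ 2))).div_const
      (4 * (m:ℝ))).prodMk
    (((hb.sin.const_mul (((m:ℝ) - 1) ^ 2)).sub (ha.sin.const_mul (((m:ℝ) + 1) ^ 2))).div_const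
      (4 * (m:ℝ)))) ?_
  ext <;> simp only [Prod.smul_fst, Prod.smul_snd, smul_eq_mul] <;> ring

/-- γ_m is a regular curve: its derivative never vanishes. -/
theorem stmt8 (m : ℕ) (hm : 2 ≤ m) (θ : ℝ) :
    deriv (gammaM m) θ ≠ 0 := by
  have hm' : (2:ℝ) ≤ m := by exact_mod_cast hm
  rw [(hasDerivAt_gammaM m θ).deriv]
  refine smul_ne_zero (div_ne_zero (mul_ne_zero (by linarith) (by linarith)) (by positivity))
    fun h => ?_
  have hsin := neg_eq_zero.mp (congrArg Prod.fst h)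
  have hcos := sub_eq_zero.mp (congrArg Prod.snd h)
  have hsq := sq_eq_sq_of_mul_sin_add_mul_sin_eq_zero hsin hcos
  nlinarith
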